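/- Let E : B → A be a conditional expectation with Index E = 2. Then for every b ∈ B, (1−e_A) b (1−e_A) = E(b)(1−e_A) in the C*-basic construction C*⟨B, e_A⟩. -/

import Mathlib

/-!
Put `c = b - E b ∈ ker E`. Index 2 means that `yᵢ = xᵢ - E xᵢ` is a quasi-basis of `ker E`
with `∑ yᵢ yᵢ* = 1`. For `c ∈ ker E` the defects `dᵢ = yᵢ* c - E(yᵢ* c)` then satisfy
`∑ E(dᵢ* dᵢ) = 0`, so by positivity and faithfulness `yᵢ* c ∈ A`; expanding
`c = ∑ E(c yᵢ) yᵢ*` gives `ker E · ker E ⊆ A`, i.e. `E(c m) = c (m - E m)`. This identity says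
that the corner `(1 - e) ι(c) (1 - e)` kills every `ι(m) e`, and the elements `ι(m) e ι(m')`
span a dense subspace, so the corner vanishes; the rest is `ι(E b)` commuting with `e`.
-/

noncomputable section

/-- A conditional expectation of a unital C*-algebra `B` onto a C*-subalgebra `A`. -/
structure CondExp (B : Type*) [NormedRing B] [StarRing B] [NormedAlgebra ℂ B] [StarModule ℂ B]
    (A : StarSubalgebra ℂ B) where
  toFun : B →ₗ[ℂ] B
  mem_range : ∀ b, toFun b ∈ A
  fixes : ∀ a ∈ A, toFun a = a
  left_mod : ∀ a ∈ A, ∀ b, toFun (a * b) = a * toFun b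
  right_mod : ∀ a ∈ A, ∀ b, toFun (b * a) = toFun b * a
  star_map : ∀ b, toFun (star b) = star (toFun b)
  pos : ∀ b, ∃ c, toFun (star b * b) = star c * c

/-- `x` is a quasi-basis for the conditional expectation `E` (with pairs `(x i, (x i)*)`). -/
def IsQuasiBasis {B : Type*} [NormedRing B] [StarRing B] [NormedAlgebra ℂ B] [StarModule ℂ B]
    {A : StarSubalgebra ℂ B} (E : CondExp B A) {n : ℕ} (x : Fin n → B) : Prop :=
  (∀ b, ∑ i, x i * E.toFun (star (x i) * b) = b) ∧
  (∀ b, ∑ i, E.toFun (b * x i) * star (x i) = b)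

/-- The C*-basic construction `C = C*⟨B, e_A⟩` of a conditional expectation `E : B → A`,
with Jones projection `e`. -/
structure BasicConstruction {B : Type*} [NormedRing B] [StarRing B] [NormedAlgebra ℂ B] [StarModule ℂ B]
    {A : StarSubalgebra ℂ B} (E : CondExp B A)
    (C : Type*) [NormedRing C] [StarRing C] [NormedAlgebra ℂ C] [StarModule ℂ C] where
  ι : B →⋆ₐ[ℂ] C
  inj : Function.Injective ι
  e : C
  e_star : star e = e
  e_idem : e * e = e
  jones : ∀ b, e * ι b * e = ι (E.toFun b) * e
  dense : (Submodule.span ℂ {y : C | ∃ b c : B, y = ι b * e * ι c}).topologicalClosure = ⊤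
  mul_e_inj : ∀ b : B, ι b * e = 0 → b = 0

namespace CondExp

variable {B : Type*} [NormedRing B] [StarRing B] [NormedAlgebra ℂ B] [StarModule ℂ B]
  {A : StarSubalgebra ℂ B} (E : CondExp B A)

def IsFaithful : Prop := ∀ b, E.toFun (star b * b) = 0 → b = 0

lemma apply_one : E.toFun 1 = 1 := E.fixes 1 (one_mem A)

lemma apply_apply (b : B) : E.toFun (E.toFun b) = E.toFun b := E.fixes _ (E.mem_range b)

lemma apply_sub_apply (b : B) : E.toFun (b - E.toFun b) = 0 := by
  rw [map_sub, apply_apply, sub_self]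

lemma apply_apply_mul (b m : B) : E.toFun (E.toFun b * m) = E.toFun b * E.toFun m :=
  E.left_mod _ (E.mem_range b) m

lemma apply_mul_apply (m b : B) : E.toFun (m * E.toFun b) = E.toFun m * E.toFun b :=
  E.right_mod _ (E.mem_range b) m

end CondExp

namespace IsQuasiBasis

variable {B : Type*} [NormedRing B] [StarRing B] [NormedAlgebra ℂ B] [StarModule ℂ B]
  {A : StarSubalgebra ℂ B} {E : CondExp B A} {n : ℕ} {x : Fin n → B} (hx : IsQuasiBasis E x)
include hx

lemma sum_mul_apply_star : ∑ i, x i * E.toFun (star (x i)) = 1 := by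
  simpa using hx.1 1

lemma sum_apply_mul_star : ∑ i, E.toFun (x i) * star (x i) = 1 := by
  simpa using hx.2 1

lemma sum_apply_mul_apply_star_mul (m : B) :
    ∑ i, E.toFun (x i) * E.toFun (star (x i) * m) = E.toFun m := by
  simpa only [map_sum, E.apply_mul_apply] using congrArg E.toFun (hx.1 m)

lemma sum_apply_mul_mul_apply_star (m : B) :
    ∑ i, E.toFun (m * x i) * E.toFun (star (x i)) = E.toFun m := by
  simpa only [map_sum, E.apply_apply_mul] using congrArg E.toFun (hx.2 m)

lemma sum_apply_mul_apply_star : ∑ i, E.toFun (x i) * E.toFun (star (x i)) = 1 := by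
  simpa [E.apply_one] using hx.sum_apply_mul_apply_star_mul 1

lemma sum_sub_apply_mul_apply (m : B) :
    ∑ i, (x i - E.toFun (x i)) * E.toFun (star (x i - E.toFun (x i)) * m)
      = m - E.toFun m := by
  have expand : ∀ i, (x i - E.toFun (x i)) * E.toFun (star (x i - E.toFun (x i)) * m)
      = (x i * E.toFun (star (x i) * m) - x i * E.toFun (star (x i)) * E.toFun m)
        - (E.toFun (x i) * E.toFun (star (x i) * m)
            - E.toFun (x i) * E.toFun (star (x i)) * E.toFun m) := fun i => by
    simp only [star_sub, ← E.star_map, sub_mul, mul_sub, map_sub, E.apply_apply_mul, mul_assoc]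
    abel
  simp only [expand, Finset.sum_sub_distrib, ← Finset.sum_mul, hx.1 m, hx.sum_mul_apply_star,
    hx.sum_apply_mul_apply_star_mul, hx.sum_apply_mul_apply_star, one_mul]
  abel

lemma sum_apply_mul_sub_mul_star (m : B) :
    ∑ i, E.toFun (m * (x i - E.toFun (x i))) * star (x i - E.toFun (x i))
      = m - E.toFun m := by
  have expand : ∀ i, E.toFun (m * (x i - E.toFun (x i))) * star (x i - E.toFun (x i))
      = (E.toFun (m * x i) * star (x i) - E.toFun (m * x i) * E.toFun (star (x i)))
        - (E.toFun m * (E.toFun (x i) * star (x i))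
            - E.toFun m * (E.toFun (x i) * E.toFun (star (x i)))) := fun i => by
    simp only [star_sub, ← E.star_map, sub_mul, mul_sub, map_sub, E.apply_mul_apply, mul_assoc]
    abel
  simp only [expand, Finset.sum_sub_distrib, ← Finset.mul_sum, hx.2 m,
    hx.sum_apply_mul_mul_apply_star, hx.sum_apply_mul_star, hx.sum_apply_mul_apply_star, mul_one]
  abel

lemma sum_sub_apply_mul_star_sub_apply (hidx : ∑ i, x i * star (x i) = 2) :
    ∑ i, (x i - E.toFun (x i)) * star (x i - E.toFun (x i)) = 1 := by
  have expand : ∀ i, (x i - E.toFun (x i)) * star (x i - E.toFun (x i))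
      = (x i * star (x i) - x i * E.toFun (star (x i)))
        - (E.toFun (x i) * star (x i) - E.toFun (x i) * E.toFun (star (x i))) := fun i => by
    simp only [star_sub, ← E.star_map, sub_mul, mul_sub]
    abel
  simp only [expand, Finset.sum_sub_distrib, hidx, hx.sum_mul_apply_star, hx.sum_apply_mul_star,
    hx.sum_apply_mul_apply_star]
  norm_num

end IsQuasiBasis

namespace CondExp

variable {B : Type*} [NormedRing B] [StarRing B] [CStarRing B] [NormedAlgebra ℂ B]
  [StarModule ℂ B] [CompleteSpace B] {A : StarSubalgebra ℂ B} {E : CondExp B A}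

lemma IsFaithful.eq_zero_of_sum_apply_star_mul_self_eq_zero (hE : E.IsFaithful) {ι : Type*}
    {s : Finset ι} {d : ι → B} (h : ∑ i ∈ s, E.toFun (star (d i) * d i) = 0) {i : ι}
    (hi : i ∈ s) : d i = 0 := by
  choose f hf using fun i => E.pos (d i)
  let _ : CStarAlgebra B := {}
  let _ := CStarAlgebra.spectralOrder B
  have := CStarAlgebra.spectralOrderedRing B
  simp only [hf] at h
  have hfi := (Finset.sum_eq_zero_iff_of_nonneg fun j _ => star_mul_self_nonneg (f j)).mp h i hi
  exact hE _ (by rw [hf, hfi])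

variable {n : ℕ} {y : Fin n → B}
  (hleft : ∀ m, ∑ i, y i * E.toFun (star (y i) * m) = m - E.toFun m)
  (hright : ∀ m, ∑ i, E.toFun (m * y i) * star (y i) = m - E.toFun m)
include hleft hright

/-- The defect `dᵢ = yᵢ* c - E(yᵢ* c)` satisfies `∑ dᵢ* dᵢ = E(c* c) - c* c`, which `E` kills. -/
lemma IsFaithful.apply_star_mul_eq_star_mul (hE : E.IsFaithful)
    (hunit : ∑ i, y i * star (y i) = 1) {c : B} (hc : E.toFun c = 0) (i : Fin n) :
    E.toFun (star (y i) * c) = star (y i) * c := by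
  set d : Fin n → B := fun i => star (y i) * c - E.toFun (star (y i) * c) with hd
  have hc' : ∑ i, y i * E.toFun (star (y i) * c) = c := by rw [hleft, hc, sub_zero]
  have hsc : ∑ i, E.toFun (star c * y i) * star (y i) = star c := by
    rw [hright, E.star_map, hc, star_zero, sub_zero]
  have expand : ∀ i, star (d i) * d i
      = (star c * (y i * star (y i)) * c - star c * (y i * E.toFun (star (y i) * c)))
        - (E.toFun (star c * y i) * star (y i) * c
            - E.toFun (star c * (y i * E.toFun (star (y i) * c)))) := fun i => by
    simp only [hd, star_sub, star_mul, star_star, ← E.star_map, sub_mul, mul_sub,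
      ← E.apply_mul_apply, mul_assoc]
    abel
  have hsum : ∑ i, star (d i) * d i = E.toFun (star c * c) - star c * c := by
    simp only [expand, Finset.sum_sub_distrib, ← map_sum, ← Finset.sum_mul, ← Finset.mul_sum,
      hunit, hc', hsc, mul_one]
    abel
  have hd0 : d i = 0 := hE.eq_zero_of_sum_apply_star_mul_self_eq_zero
    (by rw [← map_sum, hsum, map_sub, apply_apply, sub_self]) (Finset.mem_univ i)
  exact (sub_eq_zero.mp hd0).symm

/-- `ker E · ker E ⊆ A`, with `m - E m` ranging over `ker E`. -/
lemma IsFaithful.apply_mul_eq_mul_sub_apply (hE : E.IsFaithful)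
    (hunit : ∑ i, y i * star (y i) = 1) {c : B} (hc : E.toFun c = 0) (m : B) :
    E.toFun (c * m) = c * (m - E.toFun m) := by
  have hc' : ∑ i, E.toFun (c * y i) * star (y i) = c := by rw [hright, hc, sub_zero]
  have hcm : c * (m - E.toFun m)
      = ∑ i, E.toFun (c * y i) * E.toFun (star (y i) * (m - E.toFun m)) := by
    conv_lhs => rw [← hc']
    simp only [Finset.sum_mul, mul_assoc,
      hE.apply_star_mul_eq_star_mul hleft hright hunit (apply_sub_apply E m)]
  calc E.toFun (c * m) = E.toFun (c * (m - E.toFun m)) := by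
        rw [mul_sub, map_sub, apply_mul_apply, hc, zero_mul, sub_zero]
    _ = c * (m - E.toFun m) := by
        rw [hcm, map_sum]
        simp only [apply_apply_mul, apply_apply]

end CondExp

namespace BasicConstruction

variable {B : Type*} [NormedRing B] [StarRing B] [NormedAlgebra ℂ B] [StarModule ℂ B]
  {A : StarSubalgebra ℂ B} {E : CondExp B A}
  {C : Type*} [NormedRing C] [StarRing C] [NormedAlgebra ℂ C] [StarModule ℂ C]
  (bc : BasicConstruction E C)

lemma e_mul_ι_of_mem {a : B} (ha : a ∈ A) : bc.e * bc.ι a = bc.ι a * bc.e := by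
  have jones_of_mem : ∀ a ∈ A, bc.e * bc.ι a * bc.e = bc.ι a * bc.e := fun a ha => by
    rw [bc.jones, E.fixes a ha]
  calc bc.e * bc.ι a = star (bc.ι (star a) * bc.e) := by
        simp only [star_mul, bc.e_star, map_star, star_star]
    _ = star (bc.e * bc.ι (star a) * bc.e) := by rw [jones_of_mem _ (star_mem ha)]
    _ = bc.ι a * bc.e := by
        simp only [star_mul, bc.e_star, map_star, star_star, ← mul_assoc, jones_of_mem a ha]

include bc in
lemma isFaithful [CStarRing C] : E.IsFaithful := fun b hb => bc.mul_e_inj b <| by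
  rw [← CStarRing.star_mul_self_eq_zero_iff]
  calc star (bc.ι b * bc.e) * (bc.ι b * bc.e) = bc.e * bc.ι (star b * b) * bc.e := by
        simp only [star_mul, bc.e_star, map_star, map_mul, mul_assoc]
    _ = 0 := by rw [bc.jones, hb, map_zero, zero_mul]

lemma eq_zero_of_forall_mul_ι_mul_e_eq_zero {w : C} (hw : ∀ b, w * (bc.ι b * bc.e) = 0) :
    w = 0 := by
  have hspan : Submodule.span ℂ {y : C | ∃ b c : B, y = bc.ι b * bc.e * bc.ι c}
      ≤ LinearMap.ker (LinearMap.mulLeft ℂ w) := by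
    rw [Submodule.span_le]
    rintro _ ⟨b, c, rfl⟩
    simp [← mul_assoc, hw b]
  have hclosed : IsClosed (LinearMap.ker (LinearMap.mulLeft ℂ w) : Set C) :=
    isClosed_singleton.preimage (continuous_const.mul continuous_id)
  have h1 : (1 : C) ∈ LinearMap.ker (LinearMap.mulLeft ℂ w) := by
    refine Submodule.topologicalClosure_minimal _ hspan hclosed ?_
    simp [bc.dense]
  simpa using h1

lemma one_sub_e_mul_ι_mul_one_sub_e_eq_zero {c : B}
    (hmul : ∀ m, E.toFun (c * m) = c * (m - E.toFun m)) :
    (1 - bc.e) * bc.ι c * (1 - bc.e) = 0 := by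
  refine bc.eq_zero_of_forall_mul_ι_mul_e_eq_zero fun m => ?_
  calc (1 - bc.e) * bc.ι c * (1 - bc.e) * (bc.ι m * bc.e)
      = (1 - bc.e) * bc.ι c * (bc.ι m * bc.e - bc.e * bc.ι m * bc.e) := by
        simp only [mul_sub, sub_mul, one_mul, mul_one, mul_assoc]
    _ = (1 - bc.e) * bc.ι (E.toFun (c * m)) * bc.e := by
        simp only [bc.jones, hmul, map_mul, map_sub, mul_sub, sub_mul, mul_assoc]
    _ = 0 := by
        simp only [sub_mul, one_mul, mul_assoc, bc.e_mul_ι_of_mem (E.mem_range _), bc.e_idem,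
          sub_self]

end BasicConstruction

theorem corner_compress_eq_expectation_general
    {B C : Type*} [NormedRing B] [StarRing B] [CStarRing B] [NormedAlgebra ℂ B]
    [StarModule ℂ B] [CompleteSpace B]
    [NormedRing C] [StarRing C] [CStarRing C] [NormedAlgebra ℂ C]
    [StarModule ℂ C]
    {A : StarSubalgebra ℂ B} (E : CondExp B A)
    {n : ℕ} (x : Fin n → B) (hx : IsQuasiBasis E x)
    (hidx : ∑ i, x i * star (x i) = (2 : B))
    (bc : BasicConstruction E C)
    :
    ∀ b : B, (1 - bc.e) * bc.ι b * (1 - bc.e) = bc.ι (E.toFun b) * (1 - bc.e) := by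
  intro b
  have hcorner : (1 - bc.e) * bc.ι (b - E.toFun b) * (1 - bc.e) = 0 :=
    bc.one_sub_e_mul_ι_mul_one_sub_e_eq_zero <|
      bc.isFaithful.apply_mul_eq_mul_sub_apply hx.sum_sub_apply_mul_apply
        hx.sum_apply_mul_sub_mul_star (hx.sum_sub_apply_mul_star_sub_apply hidx)
        (E.apply_sub_apply b)
  have hcomm := bc.e_mul_ι_of_mem (E.mem_range b)
  calc (1 - bc.e) * bc.ι b * (1 - bc.e)
      = (1 - bc.e) * bc.ι (E.toFun b) * (1 - bc.e)
        + (1 - bc.e) * bc.ι (b - E.toFun b) * (1 - bc.e) := by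
        rw [map_sub]; noncomm_ring
    _ = bc.ι (E.toFun b) * (1 - bc.e) := by
        rw [hcorner, add_zero, sub_mul, one_mul, hcomm, ← mul_one_sub, mul_assoc,
          (IsIdempotentElem.one_sub bc.e_idem).eq]

/-- if Index E = 2 then `(1−e_A) b (1−e_A) = E(b)(1−e_A)` for all `b ∈ B`. -/
theorem corner_compress_eq_expectation
    {B C : Type*} [NormedRing B] [StarRing B] [CStarRing B] [NormedAlgebra ℂ B]
    [StarModule ℂ B] [CompleteSpace B]
    [NormedRing C] [StarRing C] [CStarRing C] [NormedAlgebra ℂ C]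
    [StarModule ℂ C] [CompleteSpace C]
    {A : StarSubalgebra ℂ B} (E : CondExp B A)
    {n : ℕ} (x : Fin n → B) (hx : IsQuasiBasis E x)
    (hidx : ∑ i, x i * star (x i) = (2 : B))
    (bc : BasicConstruction E C)
    (Et : C →ₗ[ℂ] B)
    (hEt : ∀ b c : B, Et (bc.ι b * bc.e * bc.ι c) = ((2 : ℂ))⁻¹ • (b * c))
    :
    ∀ b : B, (1 - bc.e) * bc.ι b * (1 - bc.e) = bc.ι (E.toFun b) * (1 - bc.e) :=
  corner_compress_eq_expectation_general E x hx hidx bc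

end
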